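/- arXiv:2403.11762 — 3 statements merged into one kernel-verified Lean document; each statement's English description precedes it below -/
import Mathlib

section
/- For all real b satisfying b > log₂(3π) - (1/2)·log₂(3π√3 - 4) - 1/2, the inequality 20·log₁₀(√(3/2)·2^b) > -10·log₁₀( π√3·2^(-2b-1)·(1 - π√3·2^(-2b-1)) ) holds. Moreover log₂(3π) - (1/2)·log₂(3π√3 - 4) - 1/2 < 1, so the inequality holds for every positive integer b. -/
/-!
Write `c = π√3`, `y = 2^(2b)` and `q = c · 2^(-2b-1) = c / (2y)`. Both sides of the inequality are
decibel values, so it says `(3/2) y · q (1 - q) > 1`, and this product equals `3c/4 - 3c²/(8y)`.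
Hence the inequality is equivalent to `3c² < 2y (3c - 4)`, i.e. to `(3π)² / (3π√3 - 4) < 2^(2b+1)`,
which after taking `log₂` is exactly the threshold on `b`. At `b = 1` the threshold condition reads
`9π² < 8 (3π√3 - 4)`, which holds numerically.
-/

open Real

lemma neg_logb_lt_two_mul_logb_of_one_lt_sq_mul {B a x : ℝ} (hB : 1 < B) (h : 1 < a ^ 2 * x) :
    -logb B x < 2 * logb B a := by
  have hx : x ≠ 0 := by rintro rfl; norm_num at h
  have ha : a ^ 2 ≠ 0 := by rintro ha; norm_num [ha] at h
  have hpos : 0 < logb B (a ^ 2 * x) := (logb_pos_iff hB (by linarith)).2 h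
  rw [logb_mul ha hx, logb_pow] at hpos
  push_cast at hpos
  linarith

lemma one_lt_mul_mul_one_sub_of_sq_lt {c y : ℝ} (hy : 0 < y) (h : 3 * c ^ 2 < 2 * y * (3 * c - 4)) :
    1 < 3 / 2 * y * (c / (2 * y) * (1 - c / (2 * y))) := by
  have hexpand : 3 / 2 * y * (c / (2 * y) * (1 - c / (2 * y))) = 3 * c / 4 - 3 * c ^ 2 / (8 * y) := by
    field_simp
    ring
  rw [hexpand, lt_sub_iff_add_lt, ← lt_sub_iff_add_lt', div_lt_iff₀ (by positivity)]
  linarith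

lemma logb_two_sub_half_logb_two_lt_iff {u K s : ℝ} (hu : 0 < u) (hK : 0 < K) :
    logb 2 u - 1 / 2 * logb 2 K - 1 / 2 < s ↔ u ^ 2 / K < (2 : ℝ) ^ (2 * s + 1) := by
  rw [← logb_lt_iff_lt_rpow one_lt_two (by positivity), logb_div (by positivity) hK.ne', logb_pow]
  push_cast
  constructor <;> intro h <;> linarith

lemma dynamicRange_gt_neg_logb_of_sq_lt {c b : ℝ} (h : 3 * c ^ 2 < (2 : ℝ) ^ (2 * b + 1) * (3 * c - 4)) :
    20 * logb 10 (√(3 / 2) * (2 : ℝ) ^ b) >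
      -(10 * logb 10 (c * (2 : ℝ) ^ (-2 * b - 1) * (1 - c * (2 : ℝ) ^ (-2 * b - 1)))) := by
  set y := (2 : ℝ) ^ (2 * b) with hy
  have hy_pos : 0 < y := by positivity
  have hsucc : (2 : ℝ) ^ (2 * b + 1) = 2 * y := by
    rw [rpow_add two_pos, rpow_one, mul_comm]
  have hq : c * (2 : ℝ) ^ (-2 * b - 1) = c / (2 * y) := by
    rw [← hsucc, div_eq_mul_inv, ← rpow_neg zero_le_two]
    ring_nf
  have hsq : (√(3 / 2) * (2 : ℝ) ^ b) ^ 2 = 3 / 2 * y := by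
    rw [mul_pow, sq_sqrt (by norm_num), ← rpow_natCast, ← rpow_mul zero_le_two, hy]
    ring_nf
  have key := one_lt_mul_mul_one_sub_of_sq_lt hy_pos (hsucc ▸ h)
  rw [← hsq, ← hq] at key
  have := neg_logb_lt_two_mul_logb_of_one_lt_sq_mul (by norm_num : (1 : ℝ) < 10) key
  linarith

lemma sq_three_mul_pi_lt : (3 * π) ^ 2 < 8 * (3 * π * √3 - 4) := by
  have hsqrt3 : (1.7 : ℝ) < √3 := (lt_sqrt (by norm_num)).2 (by norm_num)
  nlinarith [pi_gt_d2, pi_lt_d2]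

theorem adc_dynamic_range_resolvability :
    (∀ b : ℝ, b > Real.logb 2 (3 * π) - (1/2) * Real.logb 2 (3 * π * Real.sqrt 3 - 4) - 1/2 →
      20 * Real.logb 10 (Real.sqrt (3/2) * (2:ℝ) ^ b) >
        -(10 * Real.logb 10 (π * Real.sqrt 3 * (2:ℝ) ^ (-2 * b - 1) *
          (1 - π * Real.sqrt 3 * (2:ℝ) ^ (-2 * b - 1))))) ∧
    Real.logb 2 (3 * π) - (1/2) * Real.logb 2 (3 * π * Real.sqrt 3 - 4) - 1/2 < 1 ∧
    (∀ n : ℕ, 0 < n →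
      20 * Real.logb 10 (Real.sqrt (3/2) * (2:ℝ) ^ (n:ℝ)) >
        -(10 * Real.logb 10 (π * Real.sqrt 3 * (2:ℝ) ^ (-2 * (n:ℝ) - 1) *
          (1 - π * Real.sqrt 3 * (2:ℝ) ^ (-2 * (n:ℝ) - 1))))) := by
  have h3π : 0 < 3 * π := by positivity
  have hK : 0 < 3 * π * √3 - 4 := by nlinarith [sq_three_mul_pi_lt]
  have hc_sq : 3 * (π * √3) ^ 2 = (3 * π) ^ 2 := by
    rw [mul_pow, sq_sqrt zero_le_three]
    ring
  have threshold : ∀ b : ℝ, b > logb 2 (3 * π) - 1 / 2 * logb 2 (3 * π * √3 - 4) - 1 / 2 →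
      20 * logb 10 (√(3 / 2) * (2 : ℝ) ^ b) >
        -(10 * logb 10 (π * √3 * (2 : ℝ) ^ (-2 * b - 1) * (1 - π * √3 * (2 : ℝ) ^ (-2 * b - 1)))) := by
    intro b hb
    have h := (logb_two_sub_half_logb_two_lt_iff h3π hK).1 hb
    rw [div_lt_iff₀ hK, ← hc_sq] at h
    exact dynamicRange_gt_neg_logb_of_sq_lt (by linarith)
  have threshold_lt_one : logb 2 (3 * π) - 1 / 2 * logb 2 (3 * π * √3 - 4) - 1 / 2 < 1 := by
    rw [logb_two_sub_half_logb_two_lt_iff h3π hK, div_lt_iff₀ hK,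
      show (2 : ℝ) ^ (2 * (1 : ℝ) + 1) = 8 by norm_num]
    exact sq_three_mul_pi_lt
  exact ⟨threshold, threshold_lt_one,
    fun n hn => threshold n (threshold_lt_one.trans_le (by exact_mod_cast hn))⟩
end

section
/- Let A₁,…,A_m and B₁,…,B_m be n×n Hermitian positive definite matrices. Define λ(v) = ∏_{k=1}^m (vᴴA_k v)/(vᴴB_k v) for v ≠ 0. Then v is a stationary point of λ on the unit sphere (equivalently, a critical point of the scale-invariant function λ) if and only if (Σ_{k} A_k/(vᴴ A_k v)) v = λ̃(v) · (Σ_{k} B_k/(vᴴ B_k v)) v for some real scalar λ̃(v); moreover the gradient of λ at v is 2λ(v)·Σ_k ( A_k v/(vᴴ A_k v) − B_k v/(vᴴ B_k v) ). -/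
set_option maxHeartbeats 1000000
open Matrix
open scoped ComplexOrder

noncomputable def quadCLM {n : ℕ} (M : Matrix (Fin n) (Fin n) ℂ) (v : Fin n → ℂ) :
    (Fin n → ℂ) →L[ℝ] ℂ :=
  LinearMap.toContinuousLinearMap
  { toFun := fun w => star w ⬝ᵥ M *ᵥ v + star v ⬝ᵥ M *ᵥ w
    map_add' := by
      intro w w'
      simp only [star_add, add_dotProduct, mulVec_add, dotProduct_add]
      ring
    map_smul' := by
      intro r w
      simp only [star_smul, star_trivial, smul_dotProduct, mulVec_smul, dotProduct_smul,
        RingHom.id_apply, smul_add] }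

@[simp] lemma quadCLM_apply {n : ℕ} (M : Matrix (Fin n) (Fin n) ℂ) (v w : Fin n → ℂ) :
    quadCLM M v w = star w ⬝ᵥ M *ᵥ v + star v ⬝ᵥ M *ᵥ w := rfl

lemma hasFDerivAt_quad {n : ℕ} (M : Matrix (Fin n) (Fin n) ℂ) (v : Fin n → ℂ) :
    HasFDerivAt (fun u => star u ⬝ᵥ M *ᵥ u) (quadCLM M v) v := by
  have key : ∀ i j : Fin n, HasFDerivAt (fun u : Fin n → ℂ => (starRingEnd ℂ) (u i) * (M i j * u j))
      (((starRingEnd ℂ) (v i)) • (M i j • (ContinuousLinearMap.proj j : (Fin n → ℂ) →L[ℝ] ℂ))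
        + (M i j * v j) • ((Complex.conjCLE.toContinuousLinearMap).comp
            (ContinuousLinearMap.proj i))) v := by
    intro i j
    have h1 : HasFDerivAt (fun u : Fin n → ℂ => (starRingEnd ℂ) (u i))
        ((Complex.conjCLE.toContinuousLinearMap).comp (ContinuousLinearMap.proj i)) v :=
      ((Complex.conjCLE.toContinuousLinearMap).comp
        (ContinuousLinearMap.proj i : (Fin n → ℂ) →L[ℝ] ℂ)).hasFDerivAt
    have h2 : HasFDerivAt (fun u : Fin n → ℂ => M i j * u j)
        (M i j • (ContinuousLinearMap.proj j : (Fin n → ℂ) →L[ℝ] ℂ)) v := by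
      have := (ContinuousLinearMap.proj j : (Fin n → ℂ) →L[ℝ] ℂ).hasFDerivAt (x := v)
      simpa using this.const_mul (M i j)
    simpa using h1.fun_mul h2
  have hsum := HasFDerivAt.fun_sum (u := (Finset.univ : Finset (Fin n)))
    (fun i _ => HasFDerivAt.fun_sum (u := (Finset.univ : Finset (Fin n))) (fun j _ => key i j))
  have hfun : (fun u : Fin n → ℂ => star u ⬝ᵥ M *ᵥ u)
      = fun u => ∑ i, ∑ j, (starRingEnd ℂ) (u i) * (M i j * u j) := by
    funext u
    simp [dotProduct, mulVec, Finset.mul_sum]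
  rw [hfun]
  refine hsum.congr_fderiv ?_
  ext w
  simp only [ContinuousLinearMap.coe_sum', Finset.sum_apply, ContinuousLinearMap.add_apply,
    ContinuousLinearMap.smul_apply, ContinuousLinearMap.coe_smul', Pi.smul_apply,
    ContinuousLinearMap.proj_apply, ContinuousLinearMap.comp_apply,
    ContinuousLinearEquiv.coe_coe, Complex.conjCLE_apply, quadCLM_apply,
    dotProduct, mulVec, Finset.mul_sum, smul_eq_mul]
  rw [← Finset.sum_add_distrib]
  refine Finset.sum_congr rfl fun i _ => ?_
  rw [← Finset.sum_add_distrib]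
  refine Finset.sum_congr rfl fun j _ => ?_
  simp [Complex.conjCLE]
  ring

lemma herm_dot_eq {n : ℕ} {M : Matrix (Fin n) (Fin n) ℂ} (hM : M.IsHermitian)
    (v w : Fin n → ℂ) : star v ⬝ᵥ M *ᵥ w = star (star w ⬝ᵥ M *ᵥ v) := by
  rw [star_dotProduct (v := v) (w := M *ᵥ w)]
  congr 1
  rw [star_mulVec, hM.eq, dotProduct_mulVec]

lemma quadCLM_re {n : ℕ} {M : Matrix (Fin n) (Fin n) ℂ} (hM : M.IsHermitian)
    (v w : Fin n → ℂ) : (quadCLM M v w).re = 2 * (star w ⬝ᵥ M *ᵥ v).re := by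
  rw [quadCLM_apply, Complex.add_re, herm_dot_eq hM v w, Complex.star_def, Complex.conj_re]
  ring

lemma herm_dot_real {n : ℕ} {M : Matrix (Fin n) (Fin n) ℂ} (hM : M.IsHermitian)
    (v : Fin n → ℂ) : star v ⬝ᵥ M *ᵥ v = (((star v ⬝ᵥ M *ᵥ v).re : ℝ) : ℂ) := by
  have h := herm_dot_eq hM v v
  have him : (star v ⬝ᵥ M *ᵥ v).im = 0 := by
    have := congrArg Complex.im h
    simp [Complex.star_def] at this
    linarith
  apply Complex.ext
  · simp
  · simp [him]

lemma mySum_mulVec {n m : ℕ} (M : Fin m → Matrix (Fin n) (Fin n) ℂ) (v : Fin n → ℂ) :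
    (∑ k, M k) *ᵥ v = ∑ k, M k *ᵥ v := by
  funext i
  simp only [mulVec, dotProduct, Matrix.sum_apply, Finset.sum_mul, Finset.sum_apply]
  rw [Finset.sum_comm]

lemma myDotProduct_sum {n m : ℕ} (f : Fin m → (Fin n → ℂ)) (v : Fin n → ℂ) :
    v ⬝ᵥ (∑ k, f k) = ∑ k, v ⬝ᵥ f k := by
  simp only [dotProduct, Finset.sum_apply, Finset.mul_sum]
  rw [Finset.sum_comm]

theorem nepv_first_order_condition (n m : ℕ)
    (A B : Fin m → Matrix (Fin n) (Fin n) ℂ)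
    (hA : ∀ k, (A k).PosDef) (hB : ∀ k, (B k).PosDef)
    (v : Fin n → ℂ) (hv : v ≠ 0)
    (lam : (Fin n → ℂ) → ℝ)
    (hlam : ∀ u : Fin n → ℂ, lam u =
      ∏ k, ((star u) ⬝ᵥ ((A k) *ᵥ u)).re / ((star u) ⬝ᵥ ((B k) *ᵥ u)).re) :
    (fderiv ℝ lam v = 0 ↔ ∃ c : ℝ,
      (∑ k, ((((star v) ⬝ᵥ ((A k) *ᵥ v)).re : ℂ))⁻¹ • A k) *ᵥ v =
        (c : ℂ) • ((∑ k, ((((star v) ⬝ᵥ ((B k) *ᵥ v)).re : ℂ))⁻¹ • B k) *ᵥ v)) ∧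
    (∀ w : Fin n → ℂ, fderiv ℝ lam v w = 2 * lam v *
      ∑ k, (((star w) ⬝ᵥ ((A k) *ᵥ v)).re / ((star v) ⬝ᵥ ((A k) *ᵥ v)).re -
            ((star w) ⬝ᵥ ((B k) *ᵥ v)).re / ((star v) ⬝ᵥ ((B k) *ᵥ v)).re)) := by
  classical
  have hAh : ∀ k, (A k).IsHermitian := fun k => (hA k).1
  have hBh : ∀ k, (B k).IsHermitian := fun k => (hB k).1
  have hfA : ∀ k, 0 < ((star v) ⬝ᵥ ((A k) *ᵥ v)).re := fun k => by
    simpa using (hA k).re_dotProduct_pos hv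
  have hfB : ∀ k, 0 < ((star v) ⬝ᵥ ((B k) *ᵥ v)).re := fun k => by
    simpa using (hB k).re_dotProduct_pos hv
  -- derivatives of the quadratic forms
  have hLA : ∀ k, HasFDerivAt (fun u => ((star u) ⬝ᵥ ((A k) *ᵥ u)).re)
      (Complex.reCLM.comp (quadCLM (A k) v)) v := fun k =>
    (Complex.reCLM.hasFDerivAt.comp v (hasFDerivAt_quad (A k) v))
  have hLB : ∀ k, HasFDerivAt (fun u => ((star u) ⬝ᵥ ((B k) *ᵥ u)).re)
      (Complex.reCLM.comp (quadCLM (B k) v)) v := fun k =>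
    (Complex.reCLM.hasFDerivAt.comp v (hasFDerivAt_quad (B k) v))
  have hLAw : ∀ k (w : Fin n → ℂ), (Complex.reCLM.comp (quadCLM (A k) v)) w
      = 2 * ((star w) ⬝ᵥ ((A k) *ᵥ v)).re := fun k w => by
    rw [ContinuousLinearMap.comp_apply, Complex.reCLM_apply, quadCLM_re (hAh k)]
  have hLBw : ∀ k (w : Fin n → ℂ), (Complex.reCLM.comp (quadCLM (B k) v)) w
      = 2 * ((star w) ⬝ᵥ ((B k) *ᵥ v)).re := fun k w => by
    rw [ContinuousLinearMap.comp_apply, Complex.reCLM_apply, quadCLM_re (hBh k)]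
  -- derivative of the inverse of the denominator
  have hinv : ∀ k, HasFDerivAt (fun u => (((star u) ⬝ᵥ ((B k) *ᵥ u)).re)⁻¹)
      ((-(((star v) ⬝ᵥ ((B k) *ᵥ v)).re ^ 2)⁻¹) • (Complex.reCLM.comp (quadCLM (B k) v))) v :=
    fun k => (hasDerivAt_inv (hfB k).ne').comp_hasFDerivAt v (hLB k)
  have hr : ∀ k, HasFDerivAt
      (fun u => ((star u) ⬝ᵥ ((A k) *ᵥ u)).re * ((((star u) ⬝ᵥ ((B k) *ᵥ u)).re)⁻¹))
      ( ((star v) ⬝ᵥ ((A k) *ᵥ v)).re •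
          ((-(((star v) ⬝ᵥ ((B k) *ᵥ v)).re ^ 2)⁻¹) • (Complex.reCLM.comp (quadCLM (B k) v)))
        + ((((star v) ⬝ᵥ ((B k) *ᵥ v)).re)⁻¹) • (Complex.reCLM.comp (quadCLM (A k) v)) ) v :=
    fun k => (hLA k).mul (hinv k)
  have hlam' : lam = fun u => ∏ k,
      ((star u) ⬝ᵥ ((A k) *ᵥ u)).re * ((((star u) ⬝ᵥ ((B k) *ᵥ u)).re)⁻¹) := by
    funext u
    rw [hlam u]
    exact Finset.prod_congr rfl fun k _ => div_eq_mul_inv _ _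
  have hprod : HasFDerivAt lam
      (∑ k, (∏ j ∈ Finset.univ.erase k,
          ((star v) ⬝ᵥ ((A j) *ᵥ v)).re * ((((star v) ⬝ᵥ ((B j) *ᵥ v)).re)⁻¹)) •
        ( ((star v) ⬝ᵥ ((A k) *ᵥ v)).re •
            ((-(((star v) ⬝ᵥ ((B k) *ᵥ v)).re ^ 2)⁻¹) • (Complex.reCLM.comp (quadCLM (B k) v)))
          + ((((star v) ⬝ᵥ ((B k) *ᵥ v)).re)⁻¹) • (Complex.reCLM.comp (quadCLM (A k) v)) )) v := by
    rw [hlam']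
    exact HasFDerivAt.finset_prod (fun k _ => hr k)
  have hfder := hprod.fderiv
  -- Part 2: the explicit formula
  have hform : ∀ w : Fin n → ℂ, fderiv ℝ lam v w = 2 * lam v *
      ∑ k, (((star w) ⬝ᵥ ((A k) *ᵥ v)).re / ((star v) ⬝ᵥ ((A k) *ᵥ v)).re -
            ((star w) ⬝ᵥ ((B k) *ᵥ v)).re / ((star v) ⬝ᵥ ((B k) *ᵥ v)).re) := by
    intro w
    rw [hfder]
    rw [Finset.mul_sum]
    simp only [ContinuousLinearMap.coe_sum', Finset.sum_apply, ContinuousLinearMap.add_apply,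
      ContinuousLinearMap.coe_smul', Pi.smul_apply, smul_eq_mul]
    refine Finset.sum_congr rfl fun k _ => ?_
    rw [hLAw k w, hLBw k w]
    have hlv : lam v = (((star v) ⬝ᵥ ((A k) *ᵥ v)).re * ((((star v) ⬝ᵥ ((B k) *ᵥ v)).re)⁻¹)) *
        (∏ j ∈ Finset.univ.erase k,
          ((star v) ⬝ᵥ ((A j) *ᵥ v)).re * ((((star v) ⬝ᵥ ((B j) *ᵥ v)).re)⁻¹)) := by
      rw [hlam']
      exact (Finset.mul_prod_erase _ _ (Finset.mem_univ k)).symm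
    have ha := (hfA k).ne'
    have hb := (hfB k).ne'
    rw [hlv]
    have hid : ((star v) ⬝ᵥ ((A k) *ᵥ v)).re *
          (-(((star v) ⬝ᵥ ((B k) *ᵥ v)).re ^ 2)⁻¹ * (2 * ((star w) ⬝ᵥ ((B k) *ᵥ v)).re))
        + ((((star v) ⬝ᵥ ((B k) *ᵥ v)).re)⁻¹) * (2 * ((star w) ⬝ᵥ ((A k) *ᵥ v)).re)
        = (((star v) ⬝ᵥ ((A k) *ᵥ v)).re * ((((star v) ⬝ᵥ ((B k) *ᵥ v)).re)⁻¹)) *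
          (2 * (((star w) ⬝ᵥ ((A k) *ᵥ v)).re / ((star v) ⬝ᵥ ((A k) *ᵥ v)).re -
            ((star w) ⬝ᵥ ((B k) *ᵥ v)).re / ((star v) ⬝ᵥ ((B k) *ᵥ v)).re)) := by
      field_simp
      ring
    linear_combination (∏ j ∈ Finset.univ.erase k,
      ((star v) ⬝ᵥ ((A j) *ᵥ v)).re * ((((star v) ⬝ᵥ ((B j) *ᵥ v)).re)⁻¹)) * hid
  refine ⟨?_, hform⟩
  -- Part 1
  set xvec : Fin n → ℂ :=
    ((∑ k, ((((star v) ⬝ᵥ ((A k) *ᵥ v)).re : ℂ))⁻¹ • A k) *ᵥ v) -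
    ((∑ k, ((((star v) ⬝ᵥ ((B k) *ᵥ v)).re : ℂ))⁻¹ • B k) *ᵥ v) with hxvec
  have hdot : ∀ w : Fin n → ℂ, (star w ⬝ᵥ xvec).re =
      ∑ k, (((star w) ⬝ᵥ ((A k) *ᵥ v)).re / ((star v) ⬝ᵥ ((A k) *ᵥ v)).re -
            ((star w) ⬝ᵥ ((B k) *ᵥ v)).re / ((star v) ⬝ᵥ ((B k) *ᵥ v)).re) := by
    intro w
    rw [hxvec]
    rw [dotProduct_sub, mySum_mulVec, mySum_mulVec, myDotProduct_sum, myDotProduct_sum]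
    simp only [smul_mulVec, dotProduct_smul, smul_eq_mul, Complex.sub_re, Complex.re_sum]
    rw [← Finset.sum_sub_distrib]
    refine Finset.sum_congr rfl fun k _ => ?_
    rw [← Complex.ofReal_inv, ← Complex.ofReal_inv, Complex.re_ofReal_mul, Complex.re_ofReal_mul]
    rw [div_eq_mul_inv, div_eq_mul_inv]
    ring
  have hlampos : 0 < lam v := by
    rw [hlam v]
    exact Finset.prod_pos fun k _ => div_pos (hfA k) (hfB k)
  constructor
  · intro h0
    have hSw : ∀ w : Fin n → ℂ, (star w ⬝ᵥ xvec).re = 0 := by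
      intro w
      have := hform w
      rw [h0] at this
      simp only [ContinuousLinearMap.zero_apply] at this
      have h2 : 2 * lam v ≠ 0 := by positivity
      rw [hdot w]
      have := this.symm
      rcases mul_eq_zero.mp this with h | h
      · exact absurd h h2
      · exact h
    have hx0 : xvec = 0 := by
      have hs := hSw xvec
      have hsum : (star xvec ⬝ᵥ xvec).re = ∑ i, Complex.normSq (xvec i) := by
        simp only [dotProduct, Pi.star_apply, Complex.re_sum]
        exact Finset.sum_congr rfl fun i _ => by
          rw [Complex.star_def, mul_comm, Complex.mul_conj]
          simp
      rw [hsum] at hs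
      funext i
      have hz := (Finset.sum_eq_zero_iff_of_nonneg
        (fun j _ => Complex.normSq_nonneg (xvec j))).mp hs i (Finset.mem_univ i)
      simpa using Complex.normSq_eq_zero.mp hz
    refine ⟨1, ?_⟩
    have := sub_eq_zero.mp hx0
    rw [this]
    norm_num
  · rintro ⟨c, hc⟩
    have hxeq : ∀ w : Fin n → ℂ,
        (∑ k, (((star w) ⬝ᵥ ((A k) *ᵥ v)).re / ((star v) ⬝ᵥ ((A k) *ᵥ v)).re -
            ((star w) ⬝ᵥ ((B k) *ᵥ v)).re / ((star v) ⬝ᵥ ((B k) *ᵥ v)).re)) = 0 := by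
      rcases Nat.eq_zero_or_pos m with hm | hm
      · subst hm
        intro w
        simp
      · -- show c = 1
        have hva : star v ⬝ᵥ ((∑ k, ((((star v) ⬝ᵥ ((A k) *ᵥ v)).re : ℂ))⁻¹ • A k) *ᵥ v)
            = (m : ℂ) := by
          rw [mySum_mulVec, myDotProduct_sum]
          simp only [smul_mulVec, dotProduct_smul, smul_eq_mul]
          have h1 : ∀ k : Fin m,
              ((((star v) ⬝ᵥ ((A k) *ᵥ v)).re : ℂ))⁻¹ * ((star v) ⬝ᵥ ((A k) *ᵥ v)) = 1 := by
            intro k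
            rw [herm_dot_real (hAh k) v]
            simp only [Complex.ofReal_re]
            exact inv_mul_cancel₀ (Complex.ofReal_ne_zero.mpr (hfA k).ne')
          rw [Finset.sum_congr rfl fun k _ => h1 k]
          simp
        have hvb : star v ⬝ᵥ ((∑ k, ((((star v) ⬝ᵥ ((B k) *ᵥ v)).re : ℂ))⁻¹ • B k) *ᵥ v)
            = (m : ℂ) := by
          rw [mySum_mulVec, myDotProduct_sum]
          simp only [smul_mulVec, dotProduct_smul, smul_eq_mul]
          have h1 : ∀ k : Fin m,
              ((((star v) ⬝ᵥ ((B k) *ᵥ v)).re : ℂ))⁻¹ * ((star v) ⬝ᵥ ((B k) *ᵥ v)) = 1 := by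
            intro k
            rw [herm_dot_real (hBh k) v]
            simp only [Complex.ofReal_re]
            exact inv_mul_cancel₀ (Complex.ofReal_ne_zero.mpr (hfB k).ne')
          rw [Finset.sum_congr rfl fun k _ => h1 k]
          simp
        have hcm : (m : ℂ) = (c : ℂ) * m := by
          conv_lhs => rw [← hva]
          rw [hc, dotProduct_smul, hvb, smul_eq_mul]
        have hc1 : (c : ℂ) = 1 := by
          have hm' : (m : ℂ) ≠ 0 := Nat.cast_ne_zero.mpr hm.ne'
          exact mul_right_cancel₀ hm'
            (show (c : ℂ) * m = 1 * m by rw [one_mul]; exact hcm.symm)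
        have hx0 : xvec = 0 := by
          rw [hxvec, hc, hc1, one_smul, sub_self]
        intro w
        rw [← hdot w, hx0]
        simp
    apply ContinuousLinearMap.ext
    intro w
    rw [hform w, hxeq w]
    simp
end

section
/- Let A₁,…,A_m, B₁,…,B_m be Hermitian positive definite n×n matrices and define R(v) = Σ_{k=1}^m log₂((vᴴA_k v)/(vᴴB_k v)) for nonzero v. If v* ≠ 0 satisfies the eigenvector equation B_KKT(v*)⁻¹ A_KKT(v*) v* = λ(v*) v*, where A_KKT(v) = Σ_k A_k/(vᴴA_k v) and B_KKT(v) = Σ_k B_k/(vᴴB_k v) and λ(v) = ∏_k (vᴴA_k v)/(vᴴB_k v), then the gradient of R at v* (as a function on ℂⁿ∖{0}) vanishes in directions orthogonal to v*, i.e., v* is a stationary point of R restricted to the unit sphere. -/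
/-!
Write `A_KKT(p) = ∑ₖ Aₖ / (pᴴAₖp)` (`kktMatrix A p`) and likewise `B_KKT(p)`. For Hermitian `M`
the real derivative of `u ↦ log (uᴴMu)` at `p` is `w ↦ 2 Re (pᴴMw) / pᴴMp`, so the derivative of
`R` at `p` is `w ↦ (2 / log 2) Re (pᴴ (A_KKT(p) - B_KKT(p)) w)`.
Since `vᴴA_KKT(v)v = m = vᴴB_KKT(v)v`, pairing the fixed-point equation `A_KKT(v) v = λ B_KKT(v) v`
with `v` forces `λ = 1`. Hence `A_KKT(v) v = B_KKT(v) v`, and by Hermitian symmetry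
`vᴴA_KKT(v) = vᴴB_KKT(v)`: the whole derivative of `R` at `v` vanishes, not only in directions
orthogonal to `v`.
-/

open Matrix
open scoped ComplexOrder

namespace Matrix

variable {ι : Type*} [Fintype ι]

noncomputable def sesqFormCLM (M : Matrix ι ι ℂ) : (ι → ℂ) →L[ℝ] (ι → ℂ) →L[ℝ] ℂ :=
  (LinearMap.mk₂ ℝ (fun u w => star u ⬝ᵥ (M *ᵥ w))
    (fun u u' w => by simp only [star_add, add_dotProduct])
    (fun c u w => by simp only [star_smul, star_trivial, smul_dotProduct])
    (fun u w w' => by simp only [mulVec_add, dotProduct_add])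
    (fun c u w => by simp only [mulVec_smul, dotProduct_smul])).toContinuousBilinearMap

@[simp]
theorem sesqFormCLM_apply (M : Matrix ι ι ℂ) (u w : ι → ℂ) :
    M.sesqFormCLM u w = star u ⬝ᵥ (M *ᵥ w) := rfl

theorem PosDef.re_dotProduct_mulVec_pos {M : Matrix ι ι ℂ} (hM : M.PosDef) {x : ι → ℂ}
    (hx : x ≠ 0) : 0 < (star x ⬝ᵥ (M *ᵥ x)).re :=
  (Complex.pos_iff.1 (hM.dotProduct_mulVec_pos hx)).1

theorem IsHermitian.star_dotProduct_mulVec_comm {M : Matrix ι ι ℂ} (hM : M.IsHermitian)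
    (u w : ι → ℂ) : star w ⬝ᵥ (M *ᵥ u) = star (star u ⬝ᵥ (M *ᵥ w)) := by
  rw [star_dotProduct, star_mulVec, hM.eq, dotProduct_mulVec]

theorem IsHermitian.coe_re_star_dotProduct_mulVec_self {M : Matrix ι ι ℂ} (hM : M.IsHermitian)
    (p : ι → ℂ) : ((star p ⬝ᵥ (M *ᵥ p)).re : ℂ) = star p ⬝ᵥ (M *ᵥ p) :=
  Complex.conj_eq_iff_re.1 (hM.star_dotProduct_mulVec_comm p p).symm

theorem IsHermitian.hasFDerivAt_re_star_dotProduct_mulVec {M : Matrix ι ι ℂ}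
    (hM : M.IsHermitian) (p : ι → ℂ) :
    HasFDerivAt (fun u => (star u ⬝ᵥ (M *ᵥ u)).re)
      ((2 : ℝ) • Complex.reCLM ∘L M.sesqFormCLM p) p := by
  have hid := hasFDerivAt_id (𝕜 := ℝ) p
  have := (Complex.reCLM.hasFDerivAt).comp p (M.sesqFormCLM.hasFDerivAt_of_bilinear hid hid)
  refine this.congr_fderiv (ContinuousLinearMap.ext fun w => ?_)
  simp [hM.star_dotProduct_mulVec_comm p w, two_mul]

theorem IsHermitian.sesqFormCLM_eq_of_mulVec_eq {M N : Matrix ι ι ℂ} (hM : M.IsHermitian)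
    (hN : N.IsHermitian) {p : ι → ℂ} (h : M *ᵥ p = N *ᵥ p) :
    M.sesqFormCLM p = N.sesqFormCLM p := by
  ext w
  rw [sesqFormCLM_apply, sesqFormCLM_apply, ← star_star (star p ⬝ᵥ (M *ᵥ w)),
    ← hM.star_dotProduct_mulVec_comm, h, hN.star_dotProduct_mulVec_comm, star_star]

theorem mulVec_eq_mulVec_of_nonsing_inv_mul_mulVec_eq_smul {K : Type*} [Field K] [DecidableEq ι]
    {M N : Matrix ι ι K} (hN : IsUnit N) {v x : ι → K} {c : K}
    (h : (N⁻¹ * M) *ᵥ v = c • v) (hMN : x ⬝ᵥ (M *ᵥ v) = x ⬝ᵥ (N *ᵥ v))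
    (hN0 : x ⬝ᵥ (N *ᵥ v) ≠ 0) : M *ᵥ v = N *ᵥ v := by
  have hMv : M *ᵥ v = c • (N *ᵥ v) := by
    have := congrArg (N *ᵥ ·) h
    simp only [mulVec_mulVec, mulVec_smul] at this
    rwa [mul_nonsing_inv_cancel_left _ _ ((isUnit_iff_isUnit_det N).1 hN)] at this
  have hc : c = 1 := by
    rw [hMv, dotProduct_smul, smul_eq_mul] at hMN
    exact (mul_eq_right₀ hN0).1 hMN
  rw [hMv, hc, one_smul]

end Matrix

variable {ι κ : Type*} [Fintype ι] [Fintype κ]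

noncomputable def kktMatrix (M : κ → Matrix ι ι ℂ) (p : ι → ℂ) : Matrix ι ι ℂ :=
  ∑ k, (((star p ⬝ᵥ (M k *ᵥ p)).re : ℂ))⁻¹ • M k

theorem isHermitian_kktMatrix {M : κ → Matrix ι ι ℂ} (hM : ∀ k, (M k).IsHermitian)
    (p : ι → ℂ) : (kktMatrix M p).IsHermitian :=
  isSelfAdjoint_sum _ fun k _ => (hM k).smul (by simp [IsSelfAdjoint, Complex.conj_ofReal])

theorem posDef_kktMatrix [Nonempty κ] {M : κ → Matrix ι ι ℂ} (hM : ∀ k, (M k).PosDef)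
    {p : ι → ℂ} (hp : p ≠ 0) : (kktMatrix M p).PosDef := by
  refine posDef_sum Finset.univ_nonempty fun k _ => (hM k).smul ?_
  rw [← Complex.ofReal_inv, Complex.zero_lt_real, inv_pos]
  exact (hM k).re_dotProduct_mulVec_pos hp

theorem star_dotProduct_kktMatrix_mulVec_self {M : κ → Matrix ι ι ℂ}
    (hM : ∀ k, (M k).IsHermitian) {p : ι → ℂ} (hp : ∀ k, (star p ⬝ᵥ (M k *ᵥ p)).re ≠ 0) :
    star p ⬝ᵥ (kktMatrix M p *ᵥ p) = Fintype.card κ := by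
  have hne : ∀ k, star p ⬝ᵥ (M k *ᵥ p) ≠ 0 := fun k h => hp k (by rw [h, Complex.zero_re])
  simp [kktMatrix, sum_mulVec, dotProduct_sum, smul_mulVec,
    (hM _).coe_re_star_dotProduct_mulVec_self, hne]

theorem hasFDerivAt_sum_log_re_star_dotProduct_mulVec {M : κ → Matrix ι ι ℂ}
    (hM : ∀ k, (M k).IsHermitian) {p : ι → ℂ} (hp : ∀ k, (star p ⬝ᵥ (M k *ᵥ p)).re ≠ 0) :
    HasFDerivAt (fun u => ∑ k, Real.log (star u ⬝ᵥ (M k *ᵥ u)).re)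
      ((2 : ℝ) • Complex.reCLM ∘L (kktMatrix M p).sesqFormCLM p) p := by
  have := HasFDerivAt.fun_sum (u := Finset.univ) fun k _ =>
    ((hM k).hasFDerivAt_re_star_dotProduct_mulVec p).log (hp k)
  refine this.congr_fderiv (ContinuousLinearMap.ext fun w => ?_)
  simp [kktMatrix, sum_mulVec, dotProduct_sum, smul_mulVec, Finset.mul_sum, mul_left_comm]

theorem gpi_fixed_point_stationary (n m : ℕ)
    (A B : Fin m → Matrix (Fin n) (Fin n) ℂ)
    (hA : ∀ k, (A k).PosDef) (hB : ∀ k, (B k).PosDef)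
    (v : Fin n → ℂ) (hv : v ≠ 0)
    (R : (Fin n → ℂ) → ℝ)
    (hR : ∀ u : Fin n → ℂ, R u =
      ∑ k, Real.logb 2 (((star u) ⬝ᵥ ((A k) *ᵥ u)).re / ((star u) ⬝ᵥ ((B k) *ᵥ u)).re))
    (heig : ((∑ k, ((((star v) ⬝ᵥ ((B k) *ᵥ v)).re : ℂ))⁻¹ • B k)⁻¹ *
        (∑ k, ((((star v) ⬝ᵥ ((A k) *ᵥ v)).re : ℂ))⁻¹ • A k)) *ᵥ v =
      (((∏ k, ((star v) ⬝ᵥ ((A k) *ᵥ v)).re / ((star v) ⬝ᵥ ((B k) *ᵥ v)).re : ℝ)) : ℂ) • v) :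
    ∀ w : Fin n → ℂ, (star v) ⬝ᵥ w = 0 → fderiv ℝ R v w = 0 := by
  intro w _
  rcases isEmpty_or_nonempty (Fin m) with _ | _
  · exact absurd (by simpa [Finset.univ_eq_empty] using heig.symm) hv
  have hqA k := ((hA k).re_dotProduct_mulVec_pos hv).ne'
  have hqB k := ((hB k).re_dotProduct_mulVec_pos hv).ne'
  have hKKT : kktMatrix A v *ᵥ v = kktMatrix B v *ᵥ v := by
    refine mulVec_eq_mulVec_of_nonsing_inv_mul_mulVec_eq_smul (posDef_kktMatrix hB hv).isUnit
      heig (x := star v) ?_ ?_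
    · rw [star_dotProduct_kktMatrix_mulVec_self (fun k => (hA k).1) hqA,
        star_dotProduct_kktMatrix_mulVec_self (fun k => (hB k).1) hqB]
    · rw [star_dotProduct_kktMatrix_mulVec_self (fun k => (hB k).1) hqB]
      exact_mod_cast Fintype.card_ne_zero
  have hR_eq : R =ᶠ[nhds v] fun u => (Real.log 2)⁻¹ • (∑ k, Real.log (star u ⬝ᵥ (A k *ᵥ u)).re -
      ∑ k, Real.log (star u ⬝ᵥ (B k *ᵥ u)).re) := by
    filter_upwards [eventually_ne_nhds hv] with u hu
    rw [hR, smul_eq_mul, ← Finset.sum_sub_distrib, Finset.mul_sum]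
    refine Finset.sum_congr rfl fun k _ => ?_
    rw [Real.logb, Real.log_div ((hA k).re_dotProduct_mulVec_pos hu).ne'
      ((hB k).re_dotProduct_mulVec_pos hu).ne', inv_mul_eq_div]
  have hderiv : HasFDerivAt R (0 : (Fin n → ℂ) →L[ℝ] ℝ) v := by
    have := ((hasFDerivAt_sum_log_re_star_dotProduct_mulVec (fun k => (hA k).1) hqA).sub
      (hasFDerivAt_sum_log_re_star_dotProduct_mulVec (fun k => (hB k).1) hqB)).const_smul
      (Real.log 2)⁻¹
    rw [(isHermitian_kktMatrix (fun k => (hA k).1) v).sesqFormCLM_eq_of_mulVec_eq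
      (isHermitian_kktMatrix (fun k => (hB k).1) v) hKKT, sub_self, smul_zero] at this
    exact this.congr_of_eventuallyEq hR_eq
  rw [hderiv.fderiv]
  rfl
end
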